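/- arXiv:1510.02399 — 6 statements merged into one kernel-verified Lean document; each statement's English description precedes it below -/
import Mathlib

section
/- Let r > q ≥ 1 and let V(z) be an r×q matrix whose entries are real polynomials such that V(z) is zeroless, i.e. for every z ∈ ℂ the evaluated matrix V(z) has full column rank q. Then there exists an r×r real polynomial matrix W(z) of finite degree such that: (a) every complex root z of det W(z) satisfies |z| > 1, and (b) W(z)·V(z) = V(0), the constant r×q matrix obtained by evaluating V at 0. -/
/-!
Since `V(z)` has full column rank at every complex `z`, no prime `p ∈ ℝ[X]` can divide `V c`
without dividing `c` (evaluate at a complex root of `p`), so the cokernel of `V` over the PID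
`ℝ[X]` is torsion-free, hence free. The columns of `V` therefore extend to a basis of `ℝ[X]^r`,
i.e. `V` is a block of columns of a unimodular matrix `P`. Then `W = P(0) P⁻¹` has
`det W = 1` (so `det W` has no roots at all) and `W V = P(0) P⁻¹ V = V(0)`.
-/

open Polynomial Matrix

theorem Polynomial.eq_zero_of_forall_aeval_eq_zero {K L : Type*} [Field K] [Field L]
    [IsAlgClosed L] [Algebra K L] {a : K[X]} (h : ∀ z : L, aeval z a = 0) : a = 0 :=
  (Polynomial.map_eq_zero_iff (algebraMap K L).injective).1 <| Polynomial.funext fun z => by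
    simpa [eval_map_algebraMap] using h z

theorem Polynomial.exists_aeval_eq_zero_iff_dvd {K L : Type*} [Field K] [Field L]
    [IsAlgClosed L] [Algebra K L] {p : K[X]} (hp : Irreducible p) :
    ∃ z : L, ∀ a, aeval z a = 0 ↔ p ∣ a := by
  obtain ⟨z, hz⟩ := IsAlgClosed.exists_aeval_eq_zero L p (degree_pos_of_irreducible hp).ne'
  refine ⟨z, fun a => ?_⟩
  have hunit : IsUnit (C p.leadingCoeff⁻¹) :=
    isUnit_C.2 (inv_ne_zero (leadingCoeff_ne_zero.2 hp.ne_zero)).isUnit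
  rw [← minpoly.dvd_iff, ← minpoly.eq_of_irreducible hp hz,
    (associated_mul_unit_left p _ hunit).dvd_iff_dvd_left]

theorem Submodule.isTorsionFree_quotient_of_prime {R M : Type*} [CommRing R] [IsDomain R]
    [UniqueFactorizationMonoid R] [AddCommGroup M] [Module R M] {N : Submodule R M}
    (h : ∀ p : R, Prime p → ∀ y, p • y ∈ N → y ∈ N) :
    Module.IsTorsionFree R (M ⧸ N) := by
  have hsat : ∀ a : R, a ≠ 0 → ∀ y, a • y ∈ N → y ∈ N := by
    intro a
    induction a using UniqueFactorizationMonoid.induction_on_prime with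
    | h₁ => exact fun h0 => (h0 rfl).elim
    | h₂ u hu =>
      intro _ y hy
      simpa [smul_smul, hu.unit.inv_mul] using N.smul_mem (hu.unit⁻¹ : Rˣ) hy
    | h₃ a p ha hp ih =>
      intro hpa y hy
      rw [mul_smul] at hy
      exact ih (right_ne_zero_of_mul hpa) y (h p hp _ hy)
  refine .of_smul_eq_zero fun a x hx => or_iff_not_imp_left.2 fun ha => ?_
  obtain ⟨y, rfl⟩ := Submodule.Quotient.mk_surjective N x
  rw [← Submodule.Quotient.mk_smul, Submodule.Quotient.mk_eq_zero] at hx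
  exact (Submodule.Quotient.mk_eq_zero N).2 (hsat a ha y hx)

namespace Matrix

section mulVec

variable {m n : Type*} [Fintype n]

theorem mulVec_injective_of_rank_eq_card {K : Type*} [Field K] {A : Matrix m n K}
    (h : A.rank = Fintype.card n) : Function.Injective A.mulVec :=
  mulVec_injective_iff.2 <| linearIndependent_iff_card_eq_finrank_span.2 <| by
    rw [Set.finrank, ← rank_eq_finrank_span_cols, h]

theorem mulVec_injective_of_forall_map {R K ι : Type*} [CommRing R] [CommRing K]
    {V : Matrix m n R} (φ : ι → R →+* K) (hsep : ∀ a, (∀ i, φ i a = 0) → a = 0)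
    (hinj : ∀ i, Function.Injective (V.map (φ i)).mulVec) : Function.Injective V.mulVec := by
  rw [← coe_mulVecLin, ← LinearMap.ker_eq_bot, ker_mulVecLin_eq_bot_iff]
  intro c hc
  have hmap (i : ι) : V.map (φ i) *ᵥ (φ i ∘ c) = V.map (φ i) *ᵥ 0 := by
    ext k
    rw [← RingHom.map_mulVec, hc]
    simp
  exact funext fun j => hsep _ fun i => congrFun (hinj i (hmap i)) j

theorem mem_range_mulVecLin_of_smul_mem {R K : Type*} [CommRing R] [IsDomain R] [CommRing K]
    {V : Matrix m n R} {p : R} (hp : p ≠ 0) (φ : R →+* K) (hφ : ∀ a, φ a = 0 ↔ p ∣ a)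
    (hinj : Function.Injective (V.map φ).mulVec) {y : m → R}
    (hy : p • y ∈ LinearMap.range V.mulVecLin) : y ∈ LinearMap.range V.mulVecLin := by
  obtain ⟨c, hc⟩ := hy
  have hc0 : (V.map φ) *ᵥ (φ ∘ c) = 0 := by
    ext i
    rw [← RingHom.map_mulVec, ← mulVecLin_apply, hc]
    simp [(hφ p).2 dvd_rfl]
  have hdvd : ∀ j, p ∣ c j := fun j =>
    (hφ _).1 (congrFun (hinj (hc0.trans (mulVec_zero _).symm)) j)
  choose d hd using hdvd
  refine ⟨d, smul_right_injective (m → R) hp ?_⟩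
  dsimp only
  rw [← hc, mulVecLin_apply, mulVecLin_apply, ← mulVec_smul]
  congr 1
  ext j
  exact (hd j).symm

theorem isTorsionFree_quotient_range_mulVecLin_of_injective_map_aeval {K L : Type*} [Field K]
    [Field L] [IsAlgClosed L] [Algebra K L] {V : Matrix m n K[X]}
    (hV : ∀ z : L, Function.Injective (V.map (aeval z)).mulVec) :
    Module.IsTorsionFree K[X] ((m → K[X]) ⧸ LinearMap.range V.mulVecLin) :=
  Submodule.isTorsionFree_quotient_of_prime fun p hp _ hy => by
    obtain ⟨z, hz⟩ := exists_aeval_eq_zero_iff_dvd (L := L) hp.irreducible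
    exact mem_range_mulVecLin_of_smul_mem hp.ne_zero (aeval z).toRingHom hz (hV z) hy

theorem exists_isUnit_det_submatrix_eq {R : Type*} [CommRing R] [IsDomain R]
    [IsPrincipalIdealRing R] [Fintype m] [DecidableEq m] [DecidableEq n]
    (V : Matrix m n R) (hinj : Function.Injective V.mulVec)
    [Module.IsTorsionFree R ((m → R) ⧸ LinearMap.range V.mulVecLin)] :
    ∃ (P : Matrix m m R) (σ : n → m), IsUnit P.det ∧ P.submatrix id σ = V := by
  set N := LinearMap.range V.mulVecLin
  have : Module.Free R ((m → R) ⧸ N) := Module.free_iff_isTorsionFree.2 ‹_›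
  obtain ⟨s, hs⟩ := N.mkQ.exists_rightInverse_of_surjective N.range_mkQ
  obtain ⟨e, he, -⟩ :=
    (LinearMap.exact_map_mkQ_range V.mulVecLin).splitSurjectiveEquiv hinj ⟨s, hs⟩
  let b := ((Pi.basisFun R n).prod (Module.Free.chooseBasis R ((m → R) ⧸ N))).map e.symm
  let ι := b.indexEquiv (Pi.basisFun R m)
  let := (Pi.basisFun R m).invertibleToMatrix (b.reindex ι)
  refine ⟨(Pi.basisFun R m).toMatrix (b.reindex ι), ι ∘ Sum.inl,
    isUnit_det_of_invertible _, ?_⟩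
  ext i j
  have hb : b (Sum.inl j) = V.mulVecLin (Pi.single j 1) := by
    simp [b, he]
  simp [Module.Basis.toMatrix_apply, hb, mulVec_single]

end mulVec

variable {R m n : Type*} [CommRing R] [Fintype m] [DecidableEq m] {P : Matrix m m R[X]}

theorem det_map_C_eval_zero_mul_inv [IsDomain R] (hP : IsUnit P.det) :
    (P.map (fun p => C (p.eval 0)) * P⁻¹).det = 1 := by
  obtain ⟨a, -, ha⟩ := Polynomial.isUnit_iff.1 hP
  have hdet : (P.map (fun p => C (p.eval 0))).det = P.det := by
    change ((C.comp (evalRingHom 0)).mapMatrix P).det = P.det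
    rw [← RingHom.map_det, ← ha]
    simp
  rw [det_mul, hdet, ← det_mul, mul_nonsing_inv _ hP, det_one]

theorem map_C_eval_zero_mul_inv_mul_submatrix (hP : IsUnit P.det) (σ : n → m) :
    P.map (fun p => C (p.eval 0)) * P⁻¹ * P.submatrix id σ =
      (P.submatrix id σ).map (fun p => C (p.eval 0)) := by
  rw [Matrix.mul_assoc, ← submatrix_id_id P⁻¹,
    ← submatrix_mul _ _ _ _ _ Function.bijective_id, nonsing_inv_mul _ hP, ← Equiv.coe_refl,
    mul_submatrix_one]
  rfl

end Matrix

theorem stmt_2_general (r q : ℕ)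
    (V : Matrix (Fin r) (Fin q) (Polynomial ℝ))
    (hzl : ∀ z : ℂ, (V.map (Polynomial.aeval z)).rank = q) :
    ∃ W : Matrix (Fin r) (Fin r) (Polynomial ℝ),
      (∀ z : ℂ, Polynomial.aeval z W.det = 0 → 1 < ‖z‖) ∧
      W * V = V.map (fun v => Polynomial.C (v.eval 0)) := by
  have hV (z : ℂ) : Function.Injective (V.map (aeval z)).mulVec :=
    mulVec_injective_of_rank_eq_card (by rw [hzl, Fintype.card_fin])
  have hinj : Function.Injective V.mulVec :=
    mulVec_injective_of_forall_map (fun z : ℂ => (aeval z).toRingHom)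
      (fun _ ha => eq_zero_of_forall_aeval_eq_zero ha) hV
  have := isTorsionFree_quotient_range_mulVecLin_of_injective_map_aeval hV
  obtain ⟨P, σ, hP, rfl⟩ := exists_isUnit_det_submatrix_eq V hinj
  refine ⟨P.map (fun p => C (p.eval 0)) * P⁻¹, fun z hz => ?_,
    map_C_eval_zero_mul_inv_mul_submatrix hP σ⟩
  rw [det_map_C_eval_zero_mul_inv hP, map_one] at hz
  exact absurd hz one_ne_zero

/-- **Proposition 1(I) (Anderson–Deistler).** A tall (`r × q`, `r > q`) real polynomial
matrix `V(z)` that is zeroless (full column rank `q` at every `z ∈ ℂ`) admits a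
finite-degree stable left inverse: an `r × r` polynomial matrix `W(z)` with all roots of
`det W(z)` outside the closed unit disc and `W(z) V(z) = V(0)`. -/
theorem stmt_2 (r q : ℕ) (hq : 1 ≤ q) (hrq : q < r)
    (V : Matrix (Fin r) (Fin q) (Polynomial ℝ))
    (hzl : ∀ z : ℂ, (V.map (Polynomial.aeval z)).rank = q) :
    ∃ W : Matrix (Fin r) (Fin r) (Polynomial ℝ),
      (∀ z : ℂ, Polynomial.aeval z W.det = 0 → 1 < ‖z‖) ∧
      W * V = V.map (fun v => Polynomial.C (v.eval 0)) :=
  stmt_2_general r q V hzl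
end

section
/- Fix integers r > q ≥ 1 and s ≥ 0, and identify each point p ∈ ℝ^{rq(s+1)} with the r×q real polynomial matrix C_p(z) of degree at most s whose rq(s+1) coefficients are the entries of p. Then the set of p ∈ ℝ^{rq(s+1)} for which C_p fails to be zeroless (i.e. for which there exists z ∈ ℂ with rank C_p(z) < q) is nowhere dense in ℝ^{rq(s+1)}. In particular, generically the matrices C_p(1) and C_p(0) have full rank q. -/
/-!
If `C_p(z)` drops rank at some `z ∈ ℂ`, every `q × q` minor of `C_p` vanishes at `z`.
In particular the minors `F₀` (rows `0, …, q-1`) and `F₁` (rows `1, …, q`), polynomials in `z`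
of degree `≤ qs`, have a common root, so their resultant vanishes. The resultant is a polynomial in
the coefficients `p`, and it is nonzero at the staircase matrix with `z ^ s` on the diagonal and
`1` just below it, where `F₀ = z ^ (qs)` and `F₁ = 1`. By the identity theorem for analytic
functions, the zero set of a polynomial that is not identically zero has empty interior.
For `C_p(1)` and `C_p(0)` the polynomials `p ↦ F₁(1)` and `p ↦ F₁(0)` play that role.
-/

open Polynomial

theorem AnalyticOnNhd.isNowhereDense_setOf_eq_zero {𝕜 E F : Type*} [NontriviallyNormedField 𝕜]
    [NormedAddCommGroup E] [NormedSpace 𝕜 E] [PreconnectedSpace E]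
    [NormedAddCommGroup F] [NormedSpace 𝕜 F] {f : E → F}
    (hf : AnalyticOnNhd 𝕜 f Set.univ) (hf₀ : f ≠ 0) : IsNowhereDense {x | f x = 0} := by
  have hclosed : IsClosed {x | f x = 0} :=
    isClosed_eq (continuousOn_univ.1 hf.continuousOn) continuous_const
  rw [hclosed.isNowhereDense_iff, Set.eq_empty_iff_forall_notMem]
  intro x hx
  refine hf₀ (funext fun y => ?_)
  exact hf.eqOn_zero_of_preconnected_of_eventuallyEq_zero isPreconnected_univ (Set.mem_univ x)
    (mem_interior_iff_mem_nhds.1 hx) (Set.mem_univ y)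

theorem isNowhereDense_setOf_eval_eq_zero {m n : Type*} [Fintype m] [Fintype n] {s : ℕ}
    (Φ : MvPolynomial (m × n × Fin (s + 1)) ℝ) (p₀ : m → n → Fin (s + 1) → ℝ)
    (hp₀ : MvPolynomial.eval (fun v => p₀ v.1 v.2.1 v.2.2) Φ ≠ 0) :
    IsNowhereDense {p : m → n → Fin (s + 1) → ℝ |
      MvPolynomial.eval (fun v => p v.1 v.2.1 v.2.2) Φ = 0} := by
  refine AnalyticOnNhd.isNowhereDense_setOf_eq_zero (𝕜 := ℝ) (fun x _ => ?_)
    fun h => hp₀ (congrFun h p₀)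
  have hcoord (v : m × n × Fin (s + 1)) :
      AnalyticAt ℝ (fun p : m → n → Fin (s + 1) → ℝ => p v.1 v.2.1 v.2.2) x :=
    ((ContinuousLinearMap.proj v.2.2).comp ((ContinuousLinearMap.proj v.2.1).comp
      (ContinuousLinearMap.proj (R := ℝ) (φ := fun _ : m => n → Fin (s + 1) → ℝ) v.1))).analyticAt
      x
  simpa [MvPolynomial.coe_aeval_eq_eval] using AnalyticAt.aeval_mvPolynomial hcoord Φ

theorem Polynomial.resultant_eq_zero_of_eval_eq_zero {R : Type*} [CommRing R] {f g : R[X]}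
    {m n : ℕ} (hf : f.natDegree ≤ m) (hg : g.natDegree ≤ n) (hmn : m ≠ 0 ∨ n ≠ 0) {z : R}
    (hfz : f.eval z = 0) (hgz : g.eval z = 0) : f.resultant g m n = 0 := by
  obtain ⟨a, b, -, -, h⟩ := exists_mul_add_mul_eq_C_resultant f g hf hg hmn
  simpa [hfz, hgz] using (congrArg (eval z) h).symm

section Minors

variable {R : Type*} [CommRing R] {m n : Type*} [Fintype n] [DecidableEq n]

theorem Matrix.natDegree_det_le (M : Matrix n n R[X]) {t : ℕ}
    (h : ∀ i j, (M i j).natDegree ≤ t) : M.det.natDegree ≤ Fintype.card n * t := by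
  rw [det_apply]
  refine natDegree_sum_le_of_forall_le _ _ fun σ _ => ?_
  refine (natDegree_smul_le _ _).trans <| (natDegree_prod_le _ _).trans ?_
  exact (Finset.sum_le_sum fun i _ => h (σ i) i).trans_eq <| by
    rw [Finset.sum_const, smul_eq_mul, Finset.card_univ]

theorem Matrix.det_submatrix_eq_zero_of_rank_lt {K : Type*} [Field K]
    (A : Matrix m n K) (e : n → m) (h : A.rank < Fintype.card n) :
    (A.submatrix e id).det = 0 := by
  by_contra hdet
  have hunit : IsUnit (A.submatrix e id) := (isUnit_iff_isUnit_det _).2 (Ne.isUnit hdet)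
  have := (A.submatrix e id).rank_of_isUnit hunit ▸ A.rank_submatrix_le e id
  omega

end Minors

section PolyMatrix

variable {R S : Type*} [CommRing R] [CommRing S] {m n : Type*} {s : ℕ}

noncomputable def polyMatrix (p : m → n → Fin (s + 1) → R) : Matrix m n R[X] :=
  .of fun i j => ∑ k, C (p i j k) * X ^ (k : ℕ)

theorem natDegree_polyMatrix_le (p : m → n → Fin (s + 1) → R) (i : m) (j : n) :
    (polyMatrix p i j).natDegree ≤ s := by
  rw [polyMatrix, Matrix.of_apply]
  exact natDegree_sum_le_of_forall_le _ _ fun k _ =>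
    (natDegree_C_mul_X_pow_le (p i j k) k).trans (Nat.lt_succ_iff.1 k.2)

theorem polyMatrix_coeff {W : Matrix m n R[X]} (hW : ∀ i j, (W i j).natDegree ≤ s) :
    polyMatrix (s := s) (fun i j k => (W i j).coeff k) = W := by
  ext1 i j
  rw [polyMatrix, Matrix.of_apply,
    Fin.sum_univ_eq_sum_range (fun k => C ((W i j).coeff k) * X ^ k)]
  simp only [C_mul_X_pow_eq_monomial]
  exact ((W i j).as_sum_range' (s + 1) (Nat.lt_succ_of_le (hW i j))).symm

theorem polyMatrix_map (φ : R →+* S) (p : m → n → Fin (s + 1) → R) :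
    (polyMatrix p).map (Polynomial.map φ) = polyMatrix fun i j k => φ (p i j k) := by
  ext1 i j
  simp [polyMatrix, Polynomial.map_sum]

theorem polyMatrix_map_eval (p : m → n → Fin (s + 1) → R) (z : R) :
    (polyMatrix p).map (eval z) = .of fun i j => ∑ k, p i j k * z ^ (k : ℕ) := by
  ext1 i j
  simp [polyMatrix, eval_finsetSum]

variable [Fintype n] [DecidableEq n]

theorem map_det_submatrix_polyMatrix (φ : R →+* S) (p : m → n → Fin (s + 1) → R)
    (e : n → m) :
    ((polyMatrix p).submatrix e id).det.map φ =
      ((polyMatrix fun i j k => φ (p i j k)).submatrix e id).det := by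
  rw [← coe_mapRingHom, RingHom.map_det, RingHom.mapMatrix_apply, ← Matrix.submatrix_map,
    coe_mapRingHom, polyMatrix_map]

theorem natDegree_det_submatrix_polyMatrix_le (p : m → n → Fin (s + 1) → R) (e : n → m) :
    ((polyMatrix p).submatrix e id).det.natDegree ≤ Fintype.card n * s :=
  Matrix.natDegree_det_le _ fun i j => natDegree_polyMatrix_le p (e i) j

theorem eval_det_submatrix_polyMatrix_eq_zero {K : Type*} [Field K]
    (p : m → n → Fin (s + 1) → K) (z : K) (e : n → m)
    (h : (Matrix.of fun i j => ∑ k, p i j k * z ^ (k : ℕ)).rank < Fintype.card n) :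
    ((polyMatrix p).submatrix e id).det.eval z = 0 := by
  rw [← coe_evalRingHom, RingHom.map_det, RingHom.mapMatrix_apply, ← Matrix.submatrix_map,
    coe_evalRingHom, polyMatrix_map_eval]
  exact Matrix.det_submatrix_eq_zero_of_rank_lt _ e h

end PolyMatrix

section GenericMinor

variable (R : Type*) [CommRing R] {m n : Type*} [Fintype n] [DecidableEq n]

noncomputable def genericMinor (s : ℕ) (e : n → m) :
    (MvPolynomial (m × n × Fin (s + 1)) R)[X] :=
  ((polyMatrix fun i j k => MvPolynomial.X (i, j, k)).submatrix e id).det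

variable {R} {s : ℕ}

theorem genericMinor_map_eval (p : m → n → Fin (s + 1) → R) (e : n → m) :
    (genericMinor R s e).map (MvPolynomial.eval fun v => p v.1 v.2.1 v.2.2) =
      ((polyMatrix p).submatrix e id).det := by
  rw [genericMinor, map_det_submatrix_polyMatrix]
  simp only [MvPolynomial.eval_X]

theorem eval_resultant_genericMinor (p : m → n → Fin (s + 1) → R) (e e' : n → m) (a b : ℕ) :
    MvPolynomial.eval (fun v => p v.1 v.2.1 v.2.2)
        ((genericMinor R s e).resultant (genericMinor R s e') a b) =
      ((polyMatrix p).submatrix e id).det.resultant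
        ((polyMatrix p).submatrix e' id).det a b := by
  rw [← resultant_map_map, genericMinor_map_eval, genericMinor_map_eval]

end GenericMinor

section Staircase

variable (R : Type*) [CommRing R] (r q s : ℕ)

noncomputable def stairMatrix : Matrix (Fin r) (Fin q) R[X] :=
  .of fun i j => if (i : ℕ) = j then X ^ s else if (i : ℕ) = j + 1 then 1 else 0

noncomputable def stairCoeffs : Fin r → Fin q → Fin (s + 1) → R :=
  fun i j k => (stairMatrix R r q s i j).coeff k

variable {r q}

theorem natDegree_stairMatrix_le (i : Fin r) (j : Fin q) :
    (stairMatrix R r q s i j).natDegree ≤ s := by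
  simp only [stairMatrix, Matrix.of_apply]
  split_ifs
  exacts [natDegree_X_pow_le s, natDegree_one.trans_le s.zero_le,
    natDegree_zero.trans_le s.zero_le]

theorem polyMatrix_stairCoeffs : polyMatrix (stairCoeffs R r q s) = stairMatrix R r q s :=
  polyMatrix_coeff (natDegree_stairMatrix_le R s)

theorem det_stairMatrix_castLE (h : q ≤ r) :
    ((stairMatrix R r q s).submatrix (Fin.castLE h) id).det = X ^ (q * s) := by
  rw [Matrix.det_of_isLowerTriangular]
  · simp [stairMatrix, pow_mul']
  · intro i j hij
    have : (i : ℕ) < j := hij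
    simp only [stairMatrix, Matrix.submatrix_apply, Matrix.of_apply, Fin.val_castLE, id]
    rw [if_neg (by omega), if_neg (by omega)]

theorem det_stairMatrix_succ (h : q < r) :
    ((stairMatrix R r q s).submatrix (fun j => Fin.castLE h j.succ) id).det = 1 := by
  rw [Matrix.det_of_isUpperTriangular]
  · simp [stairMatrix]
  · intro i j hij
    have : (j : ℕ) < i := hij
    simp only [stairMatrix, Matrix.submatrix_apply, Matrix.of_apply, Fin.val_castLE,
      Fin.val_succ, id]
    rw [if_neg (by omega), if_neg (by omega)]

end Staircase

section Genericity

variable {r q : ℕ} (s : ℕ)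

theorem isNowhereDense_setOf_rank_ne (hrq : q < r) (c : ℝ) :
    IsNowhereDense {p : Fin r → Fin q → Fin (s + 1) → ℝ |
      (Matrix.of fun i j => ∑ k : Fin (s + 1), p i j k * c ^ (k : ℕ)).rank ≠ q} := by
  set e₁ : Fin q → Fin r := fun j => Fin.castLE hrq j.succ
  have key (p : Fin r → Fin q → Fin (s + 1) → ℝ) :
      MvPolynomial.eval (fun v => p v.1 v.2.1 v.2.2)
          ((genericMinor ℝ s e₁).eval (MvPolynomial.C c)) =
        ((polyMatrix p).submatrix e₁ id).det.eval c := by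
    rw [← eval₂_at_apply, MvPolynomial.eval_C, ← eval_map, genericMinor_map_eval]
  refine (isNowhereDense_setOf_eval_eq_zero ((genericMinor ℝ s e₁).eval (MvPolynomial.C c))
    (stairCoeffs ℝ r q s) ?_).mono fun p hp => ?_
  · rw [key, polyMatrix_stairCoeffs, det_stairMatrix_succ, eval_one]
    exact one_ne_zero
  · rw [Set.mem_ofPred_eq, key]
    refine eval_det_submatrix_polyMatrix_eq_zero p c e₁ ?_
    simpa using lt_of_le_of_ne (Matrix.rank_le_width _) hp

theorem isNowhereDense_setOf_exists_rank_lt (hrq : q < r) :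
    IsNowhereDense {p : Fin r → Fin q → Fin (s + 1) → ℝ |
      ∃ z : ℂ, (Matrix.of fun i j => ∑ k : Fin (s + 1), (p i j k : ℂ) * z ^ (k : ℕ)).rank < q} := by
  set e₀ : Fin q → Fin r := Fin.castLE hrq.le
  set e₁ : Fin q → Fin r := fun j => Fin.castLE hrq j.succ
  -- The formal degree `q * s + 1` of `F₁` keeps the resultant meaningful when `s = 0`.
  refine (isNowhereDense_setOf_eval_eq_zero
    ((genericMinor ℝ s e₀).resultant (genericMinor ℝ s e₁) (q * s) (q * s + 1))
    (stairCoeffs ℝ r q s) ?_).mono ?_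
  · rw [eval_resultant_genericMinor, polyMatrix_stairCoeffs, det_stairMatrix_castLE,
      det_stairMatrix_succ, resultant_X_pow_left _ _ _ (by simp)]
    simp
  · rintro p ⟨z, hz⟩
    set pℂ : Fin r → Fin q → Fin (s + 1) → ℂ := fun i j k => p i j k
    have hdeg (e : Fin q → Fin r) :
        ((polyMatrix pℂ).submatrix e id).det.natDegree ≤ q * s := by
      simpa using natDegree_det_submatrix_polyMatrix_le pℂ e
    have hroot (e : Fin q → Fin r) : ((polyMatrix pℂ).submatrix e id).det.eval z = 0 :=
      eval_det_submatrix_polyMatrix_eq_zero pℂ z e (by simpa using hz)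
    have hres := resultant_eq_zero_of_eval_eq_zero (hdeg e₀) ((hdeg e₁).trans (Nat.le_succ _))
      (Or.inr (Nat.succ_ne_zero _)) (hroot e₀) (hroot e₁)
    rw [Set.mem_ofPred_eq, eval_resultant_genericMinor, ← Complex.ofReal_eq_zero,
      ← Complex.ofRealHom_eq_coe, ← resultant_map_map, map_det_submatrix_polyMatrix,
      map_det_submatrix_polyMatrix]
    exact hres

end Genericity

theorem stmt_3_general (r q s : ℕ) (hrq : q < r) :
    IsNowhereDense {p : Fin r → Fin q → Fin (s + 1) → ℝ |
      ∃ z : ℂ, (Matrix.of fun i j => ∑ k : Fin (s + 1), (p i j k : ℂ) * z ^ (k : ℕ)).rank < q} ∧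
    IsNowhereDense {p : Fin r → Fin q → Fin (s + 1) → ℝ |
      (Matrix.of fun i j => ∑ k : Fin (s + 1), p i j k * (1 : ℝ) ^ (k : ℕ)).rank ≠ q} ∧
    IsNowhereDense {p : Fin r → Fin q → Fin (s + 1) → ℝ |
      (Matrix.of fun i j => ∑ k : Fin (s + 1), p i j k * (0 : ℝ) ^ (k : ℕ)).rank ≠ q} :=
  ⟨isNowhereDense_setOf_exists_rank_lt s hrq, isNowhereDense_setOf_rank_ne s hrq 1,
    isNowhereDense_setOf_rank_ne s hrq 0⟩

/-- **Proposition 1(II) (Anderson–Deistler).** Identifying `p ∈ ℝ^(rq(s+1))` with the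
`r × q` polynomial matrix `C_p(z)` of degree `≤ s` whose coefficients are the entries of
`p`, the set of parameters for which `C_p` fails to be zeroless (i.e. `rank C_p(z) < q`
for some `z ∈ ℂ`) is nowhere dense; in particular, generically `C_p(1)` and `C_p(0)`
have full rank `q`. -/
theorem stmt_3 (r q s : ℕ) (hq : 1 ≤ q) (hrq : q < r) :
    IsNowhereDense {p : Fin r → Fin q → Fin (s + 1) → ℝ |
      ∃ z : ℂ, (Matrix.of fun i j => ∑ k : Fin (s + 1), (p i j k : ℂ) * z ^ (k : ℕ)).rank < q} ∧
    IsNowhereDense {p : Fin r → Fin q → Fin (s + 1) → ℝ |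
      (Matrix.of fun i j => ∑ k : Fin (s + 1), p i j k * (1 : ℝ) ^ (k : ℕ)).rank ≠ q} ∧
    IsNowhereDense {p : Fin r → Fin q → Fin (s + 1) → ℝ |
      (Matrix.of fun i j => ∑ k : Fin (s + 1), p i j k * (0 : ℝ) ^ (k : ℕ)).rank ≠ q} :=
  stmt_3_general r q s hrq
end

section
/- Let r = q ≥ 2 and let c be an integer with r > c ≥ 1. Let ξ and η be r×(r−c) real matrices of full column rank r−c, let ξ⊥ and η⊥ be r×c real matrices of full column rank c with ξ'ξ⊥ = 0 and η'η⊥ = 0, and let D be an r×r real matrix. Then the r×r matrix M(1), whose first c rows are ξ⊥'D and whose last r−c rows are ξ'ξη', is invertible if and only if the c×c matrix ξ⊥'Dη⊥ is invertible. -/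
/-!
Right-multiplying `M(1)` by the square matrix `[η⊥ η]` gives, since `η'η⊥ = 0`, the block upper
triangular matrix with diagonal blocks `ξ⊥'Dη⊥` and `ξ'ξη'η`. Full column rank makes the Gram
matrices `ξ'ξ`, `η'η`, `η⊥'η⊥` invertible, and `[η⊥ η]` is invertible because its Gram matrix is
block diagonal with blocks `η⊥'η⊥` and `η'η`. So `det M(1)` is a unit iff `det (ξ⊥'Dη⊥)` is.
-/

open Matrix

theorem Matrix.isUnit_det_of_rank_eq_card {n K : Type*} [Fintype n] [DecidableEq n] [Field K]
    {A : Matrix n n K} (h : A.rank = Fintype.card n) : IsUnit A.det := by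
  rw [← isUnit_iff_isUnit_det, ← isUnit_toLin'_iff, LinearMap.isUnit_iff_range_eq_top]
  exact Submodule.eq_top_of_finrank_eq (by rwa [Module.finrank_fintype_fun_eq_card])

theorem Matrix.isUnit_det_transpose_mul_self {m n K : Type*} [Fintype m] [Fintype n]
    [DecidableEq n] [Field K] [LinearOrder K] [IsStrictOrderedRing K]
    {A : Matrix m n K} (h : A.rank = Fintype.card n) : IsUnit (Aᵀ * A).det :=
  isUnit_det_of_rank_eq_card (by rw [rank_transpose_mul_self, h])

theorem Matrix.isUnit_det_reindex_iff_of_isUnit_det {ι m R : Type*} [Fintype ι] [DecidableEq ι]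
    [Fintype m] [DecidableEq m] [CommRing R] (e : ι ≃ m) (M : Matrix ι m R) {N : Matrix m ι R}
    (hN : IsUnit (reindex (Equiv.refl m) e N).det) :
    IsUnit (reindex e (Equiv.refl m) M).det ↔ IsUnit (M * N).det := by
  have : reindex e (Equiv.refl m) M * reindex (Equiv.refl m) e N = reindex e e (M * N) :=
    submatrix_mul_equiv M N _ _ _
  rw [← det_reindex_self e (M * N), ← this, det_mul, IsUnit.mul_iff]
  exact (and_iff_left hN).symm

theorem Matrix.isUnit_det_reindex_fromCols {m n₁ n₂ R : Type*} [Fintype m] [DecidableEq m]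
    [Fintype n₁] [DecidableEq n₁] [Fintype n₂] [DecidableEq n₂] [CommRing R]
    (e : n₁ ⊕ n₂ ≃ m) {A : Matrix m n₁ R} {B : Matrix m n₂ R} (hBA : Bᵀ * A = 0)
    (hA : IsUnit (Aᵀ * A).det) (hB : IsUnit (Bᵀ * B).det) :
    IsUnit (reindex (Equiv.refl m) e (fromCols A B)).det := by
  have hAB : Aᵀ * B = 0 := by rw [← transpose_transpose B, ← transpose_mul, hBA, transpose_zero]
  set N : Matrix m m R := reindex (Equiv.refl m) e (fromCols A B)
  have hgram : Nᵀ * N = reindex e e ((fromCols A B)ᵀ * fromCols A B) :=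
    submatrix_mul_equiv (fromCols A B)ᵀ (fromCols A B) _ _ _
  rw [transpose_fromCols, fromRows_mul_fromCols, hAB, hBA] at hgram
  have hsq : N.det ^ 2 = (Nᵀ * N).det := by rw [det_mul, det_transpose, sq]
  rw [← isUnit_pow_iff two_ne_zero, hsq, hgram, det_reindex_self, det_fromBlocks_zero₂₁]
  exact hA.mul hB

/-- **Johansen's full-rank condition in the non-singular case `r = q` (remark after
Proposition 2).** With `ξ, η` of full column rank `r − c`, orthogonal complements
`ξ⊥, η⊥` of full column rank `c`, and `D` an `r × r` matrix, the matrix `M(1)` — first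
`c` rows `ξ⊥'D`, last `r − c` rows `ξ'ξη'` — is invertible iff `ξ⊥'Dη⊥` is invertible. -/
theorem stmt_6 (r c : ℕ) (hc2 : c < r)
    (ξ η : Matrix (Fin r) (Fin (r - c)) ℝ) (ξp ηp : Matrix (Fin r) (Fin c) ℝ)
    (hξ : ξ.rank = r - c) (hη : η.rank = r - c)
    (hηp : ηp.rank = c) (hoη : ηᵀ * ηp = 0)
    (D : Matrix (Fin r) (Fin r) ℝ) :
    IsUnit ((Matrix.reindex (finSumFinEquiv.trans (finCongr (by omega))) (Equiv.refl (Fin r))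
        (Matrix.fromRows (ξpᵀ * D) (ξᵀ * ξ * ηᵀ))).det) ↔
      IsUnit (ξpᵀ * D * ηp).det := by
  have hGξ := isUnit_det_transpose_mul_self (A := ξ) (by rw [hξ, Fintype.card_fin])
  have hGη := isUnit_det_transpose_mul_self (A := η) (by rw [hη, Fintype.card_fin])
  have hGηp := isUnit_det_transpose_mul_self (A := ηp) (by rw [hηp, Fintype.card_fin])
  rw [isUnit_det_reindex_iff_of_isUnit_det _ _ (isUnit_det_reindex_fromCols _ hoη hGηp hGη),
    fromRows_mul_fromCols, Matrix.mul_assoc _ ηᵀ ηp, hoη, Matrix.mul_zero,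
    Matrix.mul_assoc _ ηᵀ η, det_fromBlocks_zero₂₁, det_mul, IsUnit.mul_iff]
  exact and_iff_left (hGξ.mul hGη)
end

section
/- Fix r > q ≥ 1 and c with r > c ≥ r−q. Let ξ (r×(r−c)), η (q×(r−c)), D (r×q) be real matrices, E(z) an r×q real polynomial matrix, and define C(z) = ξη' + (1−z)D + (1−z)²E(z). Let ξ⊥ be an r×c real matrix of rank c with ξ⊥'ξ = 0, and let ζ be the r×r matrix whose first c rows are ξ⊥' and whose last r−c rows are ξ'. Define M(z) as the r×q polynomial matrix whose first c rows are ξ⊥'(D + (1−z)E(z)) and whose last r−c rows are ξ'ξη' + (1−z)ξ'D + (1−z)²ξ'E(z). Then ζ·C(z) = diag((1−z)I_c, I_{r−c})·M(z). Consequently, if ζ is invertible and M(z) is zeroless, then for every z ∈ ℂ with z ≠ 1 — in particular for every z with |z| < 1 — the matrix C(z) has full column rank q. -/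
open Matrix Polynomial

lemma map_smul_mat {m n : Type*} {R S : Type*} [CommSemiring R] [CommSemiring S]
    (f : R →+* S) (s : R) (A : Matrix m n R) :
    (s • A).map f = f s • (A.map f) := by
  ext i j
  simp [Matrix.map_apply, Matrix.smul_apply, smul_eq_mul]

lemma fromRows_map' {m₁ m₂ n R S : Type*} (A : Matrix m₁ n R) (B : Matrix m₂ n R) (f : R → S) :
    (Matrix.fromRows A B).map f = Matrix.fromRows (A.map f) (B.map f) := by
  ext (i | i) j <;> rfl

/-- **Factorization `ζC(z) = diag((1−z)I_c, I_{r−c})·M(z)` (equation (3.14)) and the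
fundamentalness consequence (Proposition 4).** For
`C(z) = ξη' + (1−z)D + (1−z)²E(z)`, with `ζ` stacking `ξ⊥'` over `ξ'` and `M(z)` the
matrix whose first `c` rows are `ξ⊥'(D + (1−z)E(z))` and last `r − c` rows are
`ξ'ξη' + (1−z)ξ'D + (1−z)²ξ'E(z)`, the factorization holds; consequently, if `ζ` is
invertible and `M(z)` is zeroless, then `C(z)` has full column rank `q` for every
`z ≠ 1`, in particular for every `|z| < 1`. -/
theorem stmt_11 (r q c : ℕ) (hq : 1 ≤ q) (hqr : q < r) (hcr : c < r) (hrc : r - q ≤ c)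
    (ξ : Matrix (Fin r) (Fin (r - c)) ℝ) (η : Matrix (Fin q) (Fin (r - c)) ℝ)
    (D : Matrix (Fin r) (Fin q) ℝ) (E : Matrix (Fin r) (Fin q) (Polynomial ℝ))
    (ξp : Matrix (Fin r) (Fin c) ℝ) (hξp : ξp.rank = c) (horth : ξpᵀ * ξ = 0)
    (ζ : Matrix (Fin c ⊕ Fin (r - c)) (Fin r) ℝ)
    (Cm : Matrix (Fin r) (Fin q) (Polynomial ℝ))
    (M : Matrix (Fin c ⊕ Fin (r - c)) (Fin q) (Polynomial ℝ))
    (hζ : ζ = Matrix.fromRows ξpᵀ ξᵀ)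
    (hCm : Cm = (ξ.map Polynomial.C) * (η.map Polynomial.C)ᵀ
        + ((1 : Polynomial ℝ) - Polynomial.X) • D.map Polynomial.C
        + ((1 : Polynomial ℝ) - Polynomial.X) ^ 2 • E)
    (hM : M = Matrix.fromRows
        ((ξp.map Polynomial.C)ᵀ *
          (D.map Polynomial.C + ((1 : Polynomial ℝ) - Polynomial.X) • E))
        ((ξ.map Polynomial.C)ᵀ * (ξ.map Polynomial.C) * (η.map Polynomial.C)ᵀ
          + ((1 : Polynomial ℝ) - Polynomial.X) •
              ((ξ.map Polynomial.C)ᵀ * D.map Polynomial.C)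
          + ((1 : Polynomial ℝ) - Polynomial.X) ^ 2 • ((ξ.map Polynomial.C)ᵀ * E))) :
    ζ.map Polynomial.C * Cm =
      Matrix.fromBlocks
        (((1 : Polynomial ℝ) - Polynomial.X) • (1 : Matrix (Fin c) (Fin c) (Polynomial ℝ)))
        0 0 (1 : Matrix (Fin (r - c)) (Fin (r - c)) (Polynomial ℝ)) * M ∧
    (ζ.rank = r → (∀ z : ℂ, (M.map (Polynomial.aeval z)).rank = q) →
      ∀ z : ℂ, z ≠ 1 → (Cm.map (Polynomial.aeval z)).rank = q) := by
  set s : Polynomial ℝ := (1 : Polynomial ℝ) - Polynomial.X with hs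
  have horthC : (ξp.map Polynomial.C)ᵀ * (ξ.map Polynomial.C) = 0 := by
    rw [← Matrix.transpose_map, ← Matrix.map_mul (f := (Polynomial.C : ℝ →+* Polynomial ℝ)),
       horth]
    ext i j; simp
  have htp : (ξpᵀ).map Polynomial.C = (ξp.map Polynomial.C)ᵀ := (Matrix.transpose_map).symm
  have hts : (ξᵀ).map Polynomial.C = (ξ.map Polynomial.C)ᵀ := (Matrix.transpose_map).symm
  have hA : (ξp.map Polynomial.C)ᵀ * Cm =
      s • ((ξp.map Polynomial.C)ᵀ * (D.map Polynomial.C + s • E)) := by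
    rw [hCm, Matrix.mul_add, Matrix.mul_add, ← Matrix.mul_assoc, horthC, Matrix.zero_mul,
      zero_add]
    simp only [Matrix.mul_add, Matrix.mul_smul, smul_add, smul_smul, sq]
  have hB : (ξ.map Polynomial.C)ᵀ * Cm =
      (ξ.map Polynomial.C)ᵀ * (ξ.map Polynomial.C) * (η.map Polynomial.C)ᵀ
        + s • ((ξ.map Polynomial.C)ᵀ * D.map Polynomial.C)
        + s ^ 2 • ((ξ.map Polynomial.C)ᵀ * E) := by
    rw [hCm, Matrix.mul_add, Matrix.mul_add, ← Matrix.mul_assoc, Matrix.mul_smul,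
      Matrix.mul_smul]
  have key : ζ.map Polynomial.C * Cm =
      Matrix.fromBlocks (s • (1 : Matrix (Fin c) (Fin c) (Polynomial ℝ))) 0 0
        (1 : Matrix (Fin (r - c)) (Fin (r - c)) (Polynomial ℝ)) * M := by
    rw [hζ, hM, fromRows_map', Matrix.fromRows_mul, Matrix.fromBlocks_mul_fromRows,
      Matrix.zero_mul, Matrix.zero_mul, add_zero, zero_add, Matrix.one_mul, Matrix.smul_mul,
      Matrix.one_mul, htp, hts, hA, hB]
  refine ⟨key, ?_⟩
  intro _ hMrank z hz
  have key2 : (ζ.map Polynomial.C).map (Polynomial.aeval z) * Cm.map (Polynomial.aeval z) =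
      Matrix.fromBlocks (((1 : ℂ) - z) • (1 : Matrix (Fin c) (Fin c) ℂ)) 0 0
        (1 : Matrix (Fin (r - c)) (Fin (r - c)) ℂ) * M.map (Polynomial.aeval z) := by
    have h := congrArg (Matrix.map ·
      ((Polynomial.aeval z : Polynomial ℝ →ₐ[ℝ] ℂ) : Polynomial ℝ →+* ℂ)) key
    rw [Matrix.map_mul, Matrix.map_mul, Matrix.fromBlocks_map] at h
    convert h using 2
    all_goals first
      | (rw [map_smul_mat]; simp [hs])
      | simp
  have hdet : IsUnit (Matrix.fromBlocks (((1 : ℂ) - z) • (1 : Matrix (Fin c) (Fin c) ℂ)) 0 0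
      (1 : Matrix (Fin (r - c)) (Fin (r - c)) ℂ)).det := by
    rw [Matrix.det_fromBlocks_zero₂₁, Matrix.det_one, mul_one, Matrix.det_smul, Matrix.det_one,
      mul_one]
    exact isUnit_iff_ne_zero.mpr (pow_ne_zero _ (sub_ne_zero.mpr (Ne.symm hz)))
  have h1 : (Cm.map (Polynomial.aeval z)).rank ≤ q := by
    simpa using Matrix.rank_le_card_width (Cm.map (Polynomial.aeval z))
  have h2 : q ≤ (Cm.map (Polynomial.aeval z)).rank := by
    calc q = ((Matrix.fromBlocks (((1 : ℂ) - z) • (1 : Matrix (Fin c) (Fin c) ℂ)) 0 0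
        (1 : Matrix (Fin (r - c)) (Fin (r - c)) ℂ)) * M.map (Polynomial.aeval z)).rank := by
          rw [Matrix.rank_mul_eq_right_of_isUnit_det _ _ hdet, hMrank z]
      _ = ((ζ.map Polynomial.C).map (Polynomial.aeval z) * Cm.map (Polynomial.aeval z)).rank := by
          rw [key2]
      _ ≤ (Cm.map (Polynomial.aeval z)).rank := Matrix.rank_mul_le_right _ _
  omega
end

section
/- Let H be a 2×2 real matrix with entries α, β (first row) and γ, δ (second row). If the polynomial identity γ(1+z) + δz² = z·(α(1+z) + βz²) holds in ℝ[z], then α = β = γ = δ = 0. Consequently, there is no invertible 2×2 real matrix H and polynomial u ∈ ℝ[z] such that H·(1+z, z²)' = (u(z), z·u(z))'. -/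
open Matrix

lemma key (a b g d : ℝ)
    (h : Polynomial.C g * (1 + Polynomial.X) + Polynomial.C d * Polynomial.X ^ 2 =
        Polynomial.X * (Polynomial.C a * (1 + Polynomial.X) +
          Polynomial.C b * Polynomial.X ^ 2)) :
    a = 0 ∧ b = 0 ∧ g = 0 ∧ d = 0 := by
  have h' : Polynomial.C g + Polynomial.C g * Polynomial.X + Polynomial.C d * Polynomial.X ^ 2 =
      Polynomial.C a * Polynomial.X + Polynomial.C a * Polynomial.X ^ 2 +
        Polynomial.C b * Polynomial.X ^ 3 := by linear_combination h
  have h0 := congrArg (fun p => Polynomial.coeff p 0) h'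
  have h1 := congrArg (fun p => Polynomial.coeff p 1) h'
  have h2 := congrArg (fun p => Polynomial.coeff p 2) h'
  have h3 := congrArg (fun p => Polynomial.coeff p 3) h'
  simp only [Polynomial.coeff_add, Polynomial.coeff_C_mul, Polynomial.coeff_X_pow,
    Polynomial.coeff_C, Polynomial.coeff_X] at h0 h1 h2 h3
  norm_num at h0 h1 h2 h3
  refine ⟨?_, ?_, ?_, ?_⟩ <;> linarith

/-- **No primitive-factor representation for `U*(z) = (1+z, z²)'` (end of Section 2.3).**
If `γ(1+z) + δz² = z(α(1+z) + βz²)` in `ℝ[z]` then `α = β = γ = δ = 0`; consequently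
there is no invertible `2 × 2` real matrix `H` and polynomial `u` with
`H·(1+z, z²)' = (u(z), z·u(z))'. -/
theorem stmt_12 :
    (∀ a b g d : ℝ,
      Polynomial.C g * (1 + Polynomial.X) + Polynomial.C d * Polynomial.X ^ 2 =
        Polynomial.X * (Polynomial.C a * (1 + Polynomial.X) +
          Polynomial.C b * Polynomial.X ^ 2) →
      a = 0 ∧ b = 0 ∧ g = 0 ∧ d = 0) ∧
    ¬ ∃ (H : Matrix (Fin 2) (Fin 2) ℝ) (u : Polynomial ℝ), IsUnit H.det ∧
        (H.map Polynomial.C).mulVec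
          ![1 + Polynomial.X, Polynomial.X ^ 2] = ![u, Polynomial.X * u] := by
  refine ⟨fun a b g d h => key a b g d h, ?_⟩
  rintro ⟨H, u, hdet, hvec⟩
  have h0 := congrFun hvec 0
  have h1 := congrFun hvec 1
  simp [mulVec, dotProduct, Fin.sum_univ_two, Matrix.map_apply] at h0 h1
  have hkey : Polynomial.C (H 1 0) * (1 + Polynomial.X) + Polynomial.C (H 1 1) * Polynomial.X ^ 2 =
      Polynomial.X * (Polynomial.C (H 0 0) * (1 + Polynomial.X) +
        Polynomial.C (H 0 1) * Polynomial.X ^ 2) := by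
    rw [h1, ← h0]
  obtain ⟨e1, e2, e3, e4⟩ := key _ _ _ _ hkey
  have : H.det = 0 := by
    simp [Matrix.det_fin_two, e1, e2, e3, e4]
  rw [this] at hdet
  exact (by norm_num : ¬ IsUnit (0:ℝ)) hdet
end

section
/- Let a, b ∈ ℝ with a ≠ b. Then the 2×2 real matrix B with first row (ab/(b−a), −a²/(b−a)) and second row (b²/(b−a), −ab/(b−a)) satisfies the polynomial identity (I₂ − B·z)·(1+az, 1+bz)' = (1, 1)' in (ℝ[z])². In particular, the zeroless polynomial vector (1+az, 1+bz)' admits a degree-one polynomial left inverse: a finite-degree matrix polynomial maps it to its value at z = 0. -/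
open Matrix Polynomial

/-!
For a constant vector `c`, `(I - B z) (1 + c z) = 1 + (c - B 1) z - (B c) z²`, so the identity
holds as soon as `B 1 = c` and `B c = 0`. The matrix of the theorem is the rank-one matrix
`c wᵀ` with `c = (a, b)'` and `w = (b, -a)' / (b - a)`, and `wᵀ 1 = 1`, `wᵀ c = 0` when
`a ≠ b`.
The left inverse is `I - B z` itself, since `1 + c z` takes the value `1` at `z = 0`.
-/

theorem one_sub_X_smul_map_C_mulVec {R n : Type*} [CommRing R] [Fintype n] [DecidableEq n]
    (B : Matrix n n R) (c : n → R) (h_one : B *ᵥ 1 = c) (h_c : B *ᵥ c = 0) :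
    (1 - (X : R[X]) • B.map C) *ᵥ (fun i => 1 + C (c i) * X) = 1 := by
  have hv : (fun i => 1 + C (c i) * X) = C ∘ (1 : n → R) + (X : R[X]) • (C ∘ c) := by
    funext i
    simp only [Pi.add_apply, Function.comp_apply, Pi.one_apply, map_one, Pi.smul_apply,
      smul_eq_mul, mul_comm]
  have hB (w : n → R) : B.map C *ᵥ (C ∘ w) = C ∘ (B *ᵥ w) :=
    funext fun i => (RingHom.map_mulVec C B w i).symm
  rw [hv, sub_mulVec, one_mulVec, smul_mulVec, mulVec_add, mulVec_smul, hB, hB, h_one, h_c]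
  funext i
  simp

theorem degree_one_sub_X_smul_map_C_le {R n : Type*} [CommRing R] [DecidableEq n]
    (B : Matrix n n R) (i j : n) : ((1 - (X : R[X]) • B.map C) i j).degree ≤ 1 := by
  simp only [Matrix.sub_apply, one_apply, Matrix.smul_apply, map_apply, smul_eq_mul]
  split_ifs <;> compute_degree

section

variable {K : Type*} [Field K]

def arCoeffMatrix (a b : K) : Matrix (Fin 2) (Fin 2) K :=
  !![a * b / (b - a), -a ^ 2 / (b - a); b ^ 2 / (b - a), -(a * b) / (b - a)]

theorem arCoeffMatrix_mulVec_one {a b : K} (hab : a ≠ b) :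
    arCoeffMatrix a b *ᵥ 1 = ![a, b] := by
  have : b - a ≠ 0 := sub_ne_zero.mpr hab.symm
  ext i
  fin_cases i <;>
    simp only [arCoeffMatrix, mulVec, dotProduct, Fin.sum_univ_two, of_apply, cons_val',
      cons_val_zero, cons_val_one, cons_val_fin_one, Fin.zero_eta, Fin.mk_one,
      Pi.one_apply, mul_one] <;>
    field_simp <;> ring

theorem arCoeffMatrix_mulVec_self (a b : K) : arCoeffMatrix a b *ᵥ ![a, b] = 0 := by
  ext i
  fin_cases i <;>
    simp only [arCoeffMatrix, mulVec, dotProduct, Fin.sum_univ_two, of_apply, cons_val',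
      cons_val_zero, cons_val_one, cons_val_fin_one, Fin.zero_eta, Fin.mk_one,
      Pi.zero_apply] <;>
    ring

end

/-- **Explicit finite autoregressive representation (Appendix C.2, equation (C.3)).**
For `a ≠ b`, the matrix `B` with rows `(ab/(b−a), −a²/(b−a))` and `(b²/(b−a), −ab/(b−a))`
satisfies `(I₂ − Bz)·(1+az, 1+bz)' = (1, 1)'`; in particular the zeroless polynomial
vector `(1+az, 1+bz)'` admits a degree-one polynomial left inverse mapping it to its
value at `z = 0`. -/
theorem stmt_14 (a b : ℝ) (hab : a ≠ b) :
    ((1 : Matrix (Fin 2) (Fin 2) (Polynomial ℝ)) -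
        (Polynomial.X : Polynomial ℝ) • (!![a * b / (b - a), -a ^ 2 / (b - a);
                          b ^ 2 / (b - a), -(a * b) / (b - a)].map Polynomial.C)).mulVec
      ![1 + Polynomial.C a * Polynomial.X, 1 + Polynomial.C b * Polynomial.X]
      = ![1, 1] ∧
    ∃ W : Matrix (Fin 2) (Fin 2) (Polynomial ℝ),
      (∀ i j, (W i j).degree ≤ 1) ∧
      W.mulVec ![1 + Polynomial.C a * Polynomial.X, 1 + Polynomial.C b * Polynomial.X]
        = ![Polynomial.C ((1 + Polynomial.C a * Polynomial.X).eval 0),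
            Polynomial.C ((1 + Polynomial.C b * Polynomial.X).eval 0)] := by
  have hv : ![1 + C a * X, 1 + C b * X] = fun i => 1 + C (![a, b] i) * X := by
    ext i; fin_cases i <;> rfl
  have hone : (1 : Fin 2 → ℝ[X]) = ![1, 1] := by
    ext i; fin_cases i <;> rfl
  have hmain : (1 - (X : ℝ[X]) • (arCoeffMatrix a b).map C) *ᵥ ![1 + C a * X, 1 + C b * X] =
      ![1, 1] := by
    rw [hv, ← hone]
    exact one_sub_X_smul_map_C_mulVec _ _ (arCoeffMatrix_mulVec_one hab)
      (arCoeffMatrix_mulVec_self a b)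
  exact ⟨hmain, _, degree_one_sub_X_smul_map_C_le _, by simpa using hmain⟩
end
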